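/- Fix real numbers α, β, γ. For (θ, φ, ψ, q₁, q₂, p₁, p₂) ∈ ℝ⁷, define the operator U(θ, φ, ψ, q₁, q₂, p₁, p₂) on L²(ℝ², ℂ) by (U(θ, φ, ψ, q₁, q₂, p₁, p₂)f)(r₁, s₂) = e^{i(θ − αq₂s₂ + αp₁r₁ + (α/2)q₁p₁ − (α/2)q₂p₂)} e^{i(φ − βp₁s₂ − (β/2)p₁p₂)} e^{i(ψ + γq₂r₁ + (γ/2)q₂q₁)} f(r₁ + q₁, s₂ + p₂). Then: (1) each such operator is unitary on L²(ℝ², ℂ); and (2) U(θ, φ, ψ, q, p) ∘ U(θ′, φ′, ψ′, q′, p′) = U(θ + θ′ + (α/2)(⟨q, p′⟩ − ⟨p, q′⟩), φ + φ′ + (β/2)(p ∧ p′), ψ + ψ′ + (γ/2)(q ∧ q′), q + q′, p + p′), where ⟨q, p⟩ = q₁p₁ + q₂p₂ and q ∧ p = q₁p₂ − q₂p₁. That is, U is a unitary representation of the triply extended group of translations of ℝ⁴. -/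

import Mathlib

open MeasureTheory

noncomputable section

/-- `L²(ℝ², ℂ)` with respect to Lebesgue measure, with variables written `(r₁, s₂)`. -/
abbrev L2R2 := MeasureTheory.Lp ℂ 2 (volume : Measure (Fin 2 → ℝ))

/-- Euclidean dot product on ℝ². -/
def dot (u w : Fin 2 → ℝ) : ℝ := u 0 * w 0 + u 1 * w 1

/-- Wedge product on ℝ²: `u ∧ w = u₁w₂ − u₂w₁`. -/
def wedge (u w : Fin 2 → ℝ) : ℝ := u 0 * w 1 - u 1 * w 0

/-- The pointwise action of the representation `U(θ, φ, ψ, q, p)` of the triply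
extended group of translations of ℝ⁴, with extension parameters `α`, `β`, `γ`:
`(U f)(r₁, s₂) = e^{i(θ − αq₂s₂ + αp₁r₁ + (α/2)q₁p₁ − (α/2)q₂p₂)}
e^{i(φ − βp₁s₂ − (β/2)p₁p₂)} e^{i(ψ + γq₂r₁ + (γ/2)q₂q₁)} f(r₁ + q₁, s₂ + p₂)`. -/
def TrAction (α β γ θ φ ψ : ℝ) (q p : Fin 2 → ℝ) (f : (Fin 2 → ℝ) → ℂ) :
    (Fin 2 → ℝ) → ℂ := fun r =>
  Complex.exp (Complex.I *
      ((θ - α * q 1 * r 1 + α * p 0 * r 0 + (α / 2) * q 0 * p 0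
        - (α / 2) * q 1 * p 1 : ℝ) : ℂ)) *
    Complex.exp (Complex.I * ((φ - β * p 0 * r 1 - (β / 2) * p 0 * p 1 : ℝ) : ℂ)) *
    Complex.exp (Complex.I * ((ψ + γ * q 1 * r 0 + (γ / 2) * q 1 * q 0 : ℝ) : ℂ)) *
    f ![r 0 + q 0, r 1 + p 1]

/-! Each `U(θ, φ, ψ, q, p)` is a phase translation `f ↦ e^{i g(r)} f(r + v)` with an affine
phase `g` and shift `v = (q₁, p₂)`. On a group with a right-invariant measure such operators are
isometries of `Lp` (the multiplier is unimodular, the translation measure-preserving) and compose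
by `(g, v)(g', v') = (g + g'(· + v), v + v')`, so they are invertible, and the multiplication law of
the extended group reduces to an identity between affine phases. -/

open Complex
open scoped ENNReal

section PhaseTranslate

variable {G E : Type*} [AddGroup G] [NormedAddCommGroup E] [NormedSpace ℂ E]

def phaseTranslate (g : G → ℝ) (v : G) (f : G → E) : G → E :=
  fun r => exp (I * (g r : ℂ)) • f (r + v)

lemma norm_phaseTranslate (g : G → ℝ) (v : G) (f : G → E) (r : G) :
    ‖phaseTranslate g v f r‖ = ‖f (r + v)‖ := by
  rw [phaseTranslate, norm_smul, Complex.norm_exp_I_mul_ofReal, one_mul]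

lemma phaseTranslate_add (g : G → ℝ) (v : G) (f f' : G → E) :
    phaseTranslate g v (f + f') = phaseTranslate g v f + phaseTranslate g v f' := by
  funext r; simp [phaseTranslate]

lemma phaseTranslate_smul (g : G → ℝ) (v : G) (c : ℂ) (f : G → E) :
    phaseTranslate g v (c • f) = c • phaseTranslate g v f := by
  funext r; simp [phaseTranslate, smul_comm c]

lemma phaseTranslate_phaseTranslate (g g' : G → ℝ) (v v' : G) (f : G → E) :
    phaseTranslate g v (phaseTranslate g' v' f)
      = phaseTranslate (fun r => g r + g' (r + v)) (v + v') f := by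
  funext r
  simp only [phaseTranslate, smul_smul, ← exp_add, add_assoc, ofReal_add, mul_add]

variable [MeasurableSpace G] [MeasurableAdd G] (μ : Measure G) [μ.IsAddRightInvariant]

lemma phaseTranslate_ae_congr (g : G → ℝ) (v : G) {f f' : G → E} (h : f =ᵐ[μ] f') :
    phaseTranslate g v f =ᵐ[μ] phaseTranslate g v f' := by
  filter_upwards [(measurePreserving_add_right μ v).quasiMeasurePreserving.ae_eq_comp h]
    with r hr
  simp only [phaseTranslate, Function.comp_apply] at hr ⊢
  rw [hr]

variable {μ} {p : ℝ≥0∞}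

lemma eLpNorm_phaseTranslate (g : G → ℝ) (v : G) {f : G → E}
    (hf : AEStronglyMeasurable f μ) :
    eLpNorm (phaseTranslate g v f) p μ = eLpNorm f p μ := by
  rw [eLpNorm_congr_norm_ae (Filter.Eventually.of_forall (norm_phaseTranslate g v f)),
    ← Function.comp_def, eLpNorm_comp_measurePreserving hf (measurePreserving_add_right μ v)]

lemma MeasureTheory.MemLp.phaseTranslate {g : G → ℝ} (hg : Measurable g) (v : G) {f : G → E}
    (hf : MemLp f p μ) : MemLp (phaseTranslate g v f) p μ := by
  refine ⟨?_, (eLpNorm_phaseTranslate g v hf.1).symm ▸ hf.2⟩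
  exact (by fun_prop : Measurable fun r => exp (I * (g r : ℂ))).aestronglyMeasurable.smul
    ((hf.comp_measurePreserving (measurePreserving_add_right μ v)).1)

namespace MeasureTheory.Lp

variable [Fact (1 ≤ p)]

def phaseTranslateₗᵢ (g : G → ℝ) (hg : Measurable g) (v : G) : Lp E p μ →ₗᵢ[ℂ] Lp E p μ where
  toFun f := ((Lp.memLp f).phaseTranslate hg v).toLp _
  map_add' f f' := by
    rw [← MemLp.toLp_add]
    refine MemLp.toLp_congr _ _ ?_
    rw [← phaseTranslate_add]
    exact phaseTranslate_ae_congr μ g v (Lp.coeFn_add f f')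
  map_smul' c f := by
    rw [RingHom.id_apply, ← MemLp.toLp_const_smul]
    refine MemLp.toLp_congr _ _ ?_
    rw [← phaseTranslate_smul]
    exact phaseTranslate_ae_congr μ g v (Lp.coeFn_smul c f)
  norm_map' f := by
    rw [LinearMap.coe_mk, AddHom.coe_mk, Lp.norm_toLp, Lp.norm_def,
      eLpNorm_phaseTranslate g v (Lp.aestronglyMeasurable f)]

lemma coeFn_phaseTranslateₗᵢ {g : G → ℝ} (hg : Measurable g) (v : G) (f : Lp E p μ) :
    phaseTranslateₗᵢ g hg v f =ᵐ[μ] phaseTranslate g v f :=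
  MemLp.coeFn_toLp ((Lp.memLp f).phaseTranslate hg v)

lemma phaseTranslateₗᵢ_zero_apply (f : Lp E p μ) :
    phaseTranslateₗᵢ (fun _ => 0) measurable_const 0 f = f := by
  refine Lp.ext ((coeFn_phaseTranslateₗᵢ _ _ f).trans (Filter.Eventually.of_forall fun r => ?_))
  simp [phaseTranslate]

lemma phaseTranslateₗᵢ_phaseTranslateₗᵢ {g g' h : G → ℝ} (hg : Measurable g)
    (hg' : Measurable g') (hh : Measurable h) {v v' w : G}
    (hgh : ∀ r, g r + g' (r + v) = h r) (hw : v + v' = w) (f : Lp E p μ) :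
    phaseTranslateₗᵢ g hg v (phaseTranslateₗᵢ g' hg' v' f) = phaseTranslateₗᵢ h hh w f := by
  obtain rfl : (fun r => g r + g' (r + v)) = h := funext hgh
  subst hw
  refine Lp.ext ((coeFn_phaseTranslateₗᵢ _ _ _).trans ?_)
  refine (phaseTranslate_ae_congr μ g v (coeFn_phaseTranslateₗᵢ hg' v' f)).trans ?_
  rw [phaseTranslate_phaseTranslate]
  exact (coeFn_phaseTranslateₗᵢ hh _ f).symm

lemma phaseTranslateₗᵢ_surjective {g : G → ℝ} (hg : Measurable g) (v : G) :
    Function.Surjective (phaseTranslateₗᵢ (E := E) (p := p) (μ := μ) g hg v) := fun f =>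
  ⟨phaseTranslateₗᵢ (fun r => -g (r + -v)) (by fun_prop) (-v) f, by
    rw [phaseTranslateₗᵢ_phaseTranslateₗᵢ (h := fun _ => 0) hg _ measurable_const (by simp)
      (add_neg_cancel v), phaseTranslateₗᵢ_zero_apply]⟩

def phaseTranslateEquiv (g : G → ℝ) (hg : Measurable g) (v : G) : Lp E p μ ≃ₗᵢ[ℂ] Lp E p μ :=
  LinearIsometryEquiv.ofSurjective _ (phaseTranslateₗᵢ_surjective hg v)

end MeasureTheory.Lp

end PhaseTranslate

open MeasureTheory.Lp

def trPhase (α β γ θ φ ψ : ℝ) (q p : Fin 2 → ℝ) (r : Fin 2 → ℝ) : ℝ :=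
  (θ - α * q 1 * r 1 + α * p 0 * r 0 + (α / 2) * q 0 * p 0 - (α / 2) * q 1 * p 1)
    + (φ - β * p 0 * r 1 - (β / 2) * p 0 * p 1)
    + (ψ + γ * q 1 * r 0 + (γ / 2) * q 1 * q 0)

lemma measurable_trPhase (α β γ θ φ ψ : ℝ) (q p : Fin 2 → ℝ) :
    Measurable (trPhase α β γ θ φ ψ q p) := by
  unfold trPhase; fun_prop

lemma phaseTranslate_trPhase (α β γ θ φ ψ : ℝ) (q p : Fin 2 → ℝ) (f : (Fin 2 → ℝ) → ℂ) :
    phaseTranslate (trPhase α β γ θ φ ψ q p) ![q 0, p 1] f = TrAction α β γ θ φ ψ q p f := by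
  funext r
  have hshift : r + ![q 0, p 1] = ![r 0 + q 0, r 1 + p 1] := by
    funext i; fin_cases i <;> rfl
  simp only [phaseTranslate, TrAction, trPhase, hshift, smul_eq_mul, ofReal_add, mul_add, exp_add]

lemma trPhase_add_trPhase (α β γ θ φ ψ θ' φ' ψ' : ℝ) (q p q' p' r : Fin 2 → ℝ) :
    trPhase α β γ θ φ ψ q p r + trPhase α β γ θ' φ' ψ' q' p' (r + ![q 0, p 1])
      = trPhase α β γ (θ + θ' + (α / 2) * (dot q p' - dot p q')) (φ + φ' + (β / 2) * wedge p p')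
          (ψ + ψ' + (γ / 2) * wedge q q') (q + q') (p + p') r := by
  simp only [trPhase, dot, wedge, Pi.add_apply, Matrix.cons_val_zero, Matrix.cons_val_one]
  ring

lemma vecCons_add_vecCons (a b c d : ℝ) : ![a, b] + ![c, d] = ![a + c, b + d] := by
  funext i; fin_cases i <;> rfl

/-- `U` is a unitary representation of the triply extended group of translations of
ℝ⁴: (1) each `U(θ, φ, ψ, q, p)` is a unitary operator on `L²(ℝ², ℂ)` acting (a.e.)
by the stated formula, and (2) `U(θ,φ,ψ,q,p) ∘ U(θ′,φ′,ψ′,q′,p′) =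
U(θ+θ′+(α/2)(⟨q,p′⟩−⟨p,q′⟩), φ+φ′+(β/2)(p∧p′), ψ+ψ′+(γ/2)(q∧q′), q+q′, p+p′)`. -/
theorem triply_extended_unitary_representation (α β γ : ℝ) :
    ∃ U : ℝ → ℝ → ℝ → (Fin 2 → ℝ) → (Fin 2 → ℝ) → (L2R2 ≃ₗᵢ[ℂ] L2R2),
      (∀ (θ φ ψ : ℝ) (q p : Fin 2 → ℝ) (f : L2R2),
        ⇑(U θ φ ψ q p f) =ᵐ[volume] TrAction α β γ θ φ ψ q p ⇑f) ∧
      (∀ (θ φ ψ : ℝ) (q p : Fin 2 → ℝ) (θ' φ' ψ' : ℝ) (q' p' : Fin 2 → ℝ)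
         (f : L2R2),
        U θ φ ψ q p (U θ' φ' ψ' q' p' f)
          = U (θ + θ' + (α / 2) * (dot q p' - dot p q'))
              (φ + φ' + (β / 2) * wedge p p')
              (ψ + ψ' + (γ / 2) * wedge q q') (q + q') (p + p') f) := by
  refine ⟨fun θ φ ψ q p =>
    phaseTranslateEquiv (trPhase α β γ θ φ ψ q p) (measurable_trPhase ..) ![q 0, p 1], ?_, ?_⟩
  · intro θ φ ψ q p f
    rw [← phaseTranslate_trPhase]
    exact coeFn_phaseTranslateₗᵢ (measurable_trPhase ..) _ f
  · intro θ φ ψ q p θ' φ' ψ' q' p' f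
    exact phaseTranslateₗᵢ_phaseTranslateₗᵢ (measurable_trPhase ..) (measurable_trPhase ..)
      (measurable_trPhase ..) (trPhase_add_trPhase α β γ θ φ ψ θ' φ' ψ' q p q' p')
      (vecCons_add_vecCons ..) f
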